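/- Under the hypotheses of the linearity theorem, $R_H\big(\sum_{G \subseteq L} c_G^{(L)}(t) R_G(v)\big) = \sum_{G \subseteq L} c_G^{(L)}(t) R_{G \cup H}(v)$ for every $H \subseteq L$, $v$ a nonnegative measure on $X$, and $t \geq 0$. -/

import Mathlib

open Finset

variable {n : ℕ}

/-- Total mass of a population. -/
noncomputable def mass {X : Fin (n+1) → Type*} [∀ i, Fintype (X i)]
    (ω : (∀ i, X i) → ℝ) : ℝ := ∑ x, ω x

/-- Leading marginal `π_{<α}.ω`, encoded as a function on full types that only
depends on the coordinates at sites `≤ α`. -/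
noncomputable def margLe {X : Fin (n+1) → Type*} [∀ i, Fintype (X i)] [∀ i, DecidableEq (X i)]
    (α : Fin n) (ω : (∀ i, X i) → ℝ) : (∀ i, X i) → ℝ :=
  fun x => ∑ y, if ∀ i : Fin (n+1), (i : ℕ) ≤ (α : ℕ) → y i = x i then ω y else 0

/-- Trailing marginal `π_{>α}.ω`. -/
noncomputable def margGt {X : Fin (n+1) → Type*} [∀ i, Fintype (X i)] [∀ i, DecidableEq (X i)]
    (α : Fin n) (ω : (∀ i, X i) → ℝ) : (∀ i, X i) → ℝ :=
  fun x => ∑ y, if ∀ i : Fin (n+1), (α : ℕ) < (i : ℕ) → y i = x i then ω y else 0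

/-- Single-site marginal `π_i.ω`. -/
noncomputable def margAt {X : Fin (n+1) → Type*} [∀ i, Fintype (X i)] [∀ i, DecidableEq (X i)]
    (i : Fin (n+1)) (ω : (∀ i, X i) → ℝ) : (∀ i, X i) → ℝ :=
  fun x => ∑ y, if y i = x i then ω y else 0

/-- Elementary recombinator at link `α` (the link between sites `α` and `α+1`). -/
noncomputable def reco {X : Fin (n+1) → Type*} [∀ i, Fintype (X i)] [∀ i, DecidableEq (X i)]
    (α : Fin n) (ω : (∀ i, X i) → ℝ) : (∀ i, X i) → ℝ :=
  fun x => (mass ω)⁻¹ * (margLe α ω x * margGt α ω x)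

/-- Composite recombinator `R_G`: composition of the elementary recombinators over `G`. -/
noncomputable def recoSet {X : Fin (n+1) → Type*} [∀ i, Fintype (X i)] [∀ i, DecidableEq (X i)]
    (G : Finset (Fin n)) (ω : (∀ i, X i) → ℝ) : (∀ i, X i) → ℝ :=
  (G.sort (· ≤ ·)).foldr (fun α ω' => reco α ω') ω

/-!
Recombinators commute and are idempotent (`R_α R_β ω` is `m⁻³` times the product of the
marginals of `ω` on the four blocks of sites cut out by `α` and `β`, symmetric in `α, β`), so
`R_H R_G = R_{G ∪ H}` and, by induction on `H`, it suffices to push one `R_α` through an average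
`w = ∑_G c_G R_{G ∪ K} v`. Now `R_α w` only involves the mass of `w` and its marginals on the
sites `≤ α` and `> α`, and these are affine in the weights. The marginal of `R_S v` on the sites
`≤ α` does not see the links of `S` above `α`, and symmetrically. Splitting the links into
`L₁ = {β ≤ α}` and `L₂ = {β > α}` and writing `c_G = c_{G ∩ L₁} c_{G ∩ L₂}`, the normalization
turns the two marginals of `w` into an average over `L₁` and an average over `L₂`, and their
product is again the `c`-average of `R_α R_{G ∪ K} v`. If `v` has mass `0`, every `R_α` sends
`v` and `w` to `0` (the division by the mass is `0⁻¹ = 0`), which settles that case.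
-/

theorem sum_powerset_union_mul {ι R : Type*} [DecidableEq ι] [CommSemiring R] {L₁ L₂ : Finset ι}
    (hd : Disjoint L₁ L₂) (f g : Finset ι → R) :
    ∑ G ∈ (L₁ ∪ L₂).powerset, f (G ∩ L₁) * g (G ∩ L₂) =
      (∑ G ∈ L₁.powerset, f G) * ∑ G ∈ L₂.powerset, g G := by
  rw [sum_mul_sum, ← sum_product']
  refine sum_nbij' (fun G => (G ∩ L₁, G ∩ L₂)) (fun p => p.1 ∪ p.2) ?_ ?_ ?_ ?_ (fun _ _ => rfl)
  · intro G _
    simp [inter_subset_right]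
  · rintro ⟨A, B⟩ h
    simp only [mem_product, mem_powerset] at h ⊢
    exact union_subset_union h.1 h.2
  · intro G hG
    rw [← inter_union_distrib_left, inter_eq_left.mpr (mem_powerset.mp hG)]
  · rintro ⟨A, B⟩ h
    simp only [mem_product, mem_powerset] at h
    rw [union_inter_distrib_right, union_inter_distrib_right, inter_eq_left.mpr h.1,
      inter_eq_left.mpr h.2, disjoint_iff_inter_eq_empty.mp (hd.mono_left h.1),
      disjoint_iff_inter_eq_empty.mp (hd.symm.mono_left h.2), union_empty, empty_union]

section

variable {X : Fin (n+1) → Type*} [∀ i, Fintype (X i)]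

theorem mass_sum_mul {ι : Type*} (s : Finset ι) (a : ι → ℝ) (u : ι → (∀ i, X i) → ℝ) :
    mass (fun x => ∑ k ∈ s, a k * u k x) = ∑ k ∈ s, a k * mass (u k) := by
  simp only [mass, mul_sum]
  exact sum_comm

variable [∀ i, DecidableEq (X i)]

/-- Marginal on the sites satisfying `p`; `margLe α` and `margGt α` are the cases `(· ≤ α)` and
`(α < ·)` definitionally. -/
noncomputable def marg (p : Fin (n+1) → Prop) [DecidablePred p] (ω : (∀ i, X i) → ℝ) :
    (∀ i, X i) → ℝ :=
  fun x => ∑ y, if ∀ i, p i → y i = x i then ω y else 0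

theorem marg_congr {p q : Fin (n+1) → Prop} [DecidablePred p] [DecidablePred q]
    (h : ∀ i, p i ↔ q i) (ω : (∀ i, X i) → ℝ) : marg p ω = marg q ω := by
  funext x
  simp only [marg, h]

theorem marg_false (ω : (∀ i, X i) → ℝ) : marg (fun _ => False) ω = fun _ => mass ω := by
  funext x
  simp [marg, mass]

theorem marg_sum_mul {ι : Type*} (p : Fin (n+1) → Prop) [DecidablePred p] (s : Finset ι)
    (a : ι → ℝ) (u : ι → (∀ i, X i) → ℝ) :
    marg p (fun x => ∑ k ∈ s, a k * u k x) = fun x => ∑ k ∈ s, a k * marg p (u k) x := by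
  funext x
  simp only [marg, mul_sum, mul_ite, mul_zero]
  rw [sum_comm]
  simp [sum_ite_irrel]

theorem margLe_sum_mul {ι : Type*} (α : Fin n) (s : Finset ι) (a : ι → ℝ)
    (u : ι → (∀ i, X i) → ℝ) :
    margLe α (fun x => ∑ k ∈ s, a k * u k x) = fun x => ∑ k ∈ s, a k * margLe α (u k) x :=
  marg_sum_mul _ s a u

theorem margGt_sum_mul {ι : Type*} (α : Fin n) (s : Finset ι) (a : ι → ℝ)
    (u : ι → (∀ i, X i) → ℝ) :
    margGt α (fun x => ∑ k ∈ s, a k * u k x) = fun x => ∑ k ∈ s, a k * margGt α (u k) x :=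
  marg_sum_mul _ s a u

def glue (β : Fin n) (z w : ∀ i, X i) : ∀ i, X i :=
  fun i => if (i : ℕ) ≤ β then z i else w i

theorem margLe_mul_margGt (β : Fin n) (ω : (∀ i, X i) → ℝ) (y : ∀ i, X i) :
    margLe β ω y * margGt β ω y = ∑ z, ∑ w, if y = glue β z w then ω z * ω w else 0 := by
  simp only [margLe, margGt, sum_mul_sum, ite_zero_mul_ite_zero]
  refine sum_congr rfl fun z _ => sum_congr rfl fun w _ => if_congr ?_ rfl rfl
  constructor
  · rintro ⟨hz, hw⟩
    funext i
    by_cases h : (i : ℕ) ≤ β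
    · simp [glue, h, hz i h]
    · simp [glue, h, hw i (by omega)]
  · rintro rfl
    exact ⟨fun i h => by simp [glue, h], fun i h => by simp [glue, show ¬ (i : ℕ) ≤ β by omega]⟩

theorem sum_mul_margLe_mul_margGt (f : (∀ i, X i) → ℝ) (β : Fin n) (ω : (∀ i, X i) → ℝ) :
    ∑ y, f y * (margLe β ω y * margGt β ω y) = ∑ z, ∑ w, f (glue β z w) * (ω z * ω w) := by
  simp only [margLe_mul_margGt, mul_sum, mul_ite, mul_zero]
  rw [sum_comm]
  refine sum_congr rfl fun z _ => ?_
  rw [sum_comm]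
  simp

theorem reco_apply (β : Fin n) (ω : (∀ i, X i) → ℝ) (x : ∀ i, X i) :
    reco β ω x = (mass ω)⁻¹ * (margLe β ω x * margGt β ω x) := rfl

theorem mass_reco (β : Fin n) (ω : (∀ i, X i) → ℝ) : mass (reco β ω) = mass ω := by
  have hsum := sum_mul_margLe_mul_margGt (fun _ => 1) β ω
  simp only [one_mul, ← sum_mul_sum] at hsum
  have hmass : mass (reco β ω) = (mass ω)⁻¹ * (mass ω * mass ω) := by
    rw [mass, sum_congr rfl fun x _ => reco_apply β ω x, ← mul_sum, hsum]
    rfl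
  by_cases hm : mass ω = 0
  · simp [hmass, hm]
  · rw [hmass]
    field_simp

theorem reco_of_mass_eq_zero {ω : (∀ i, X i) → ℝ} (h : mass ω = 0) (β : Fin n) : reco β ω = 0 := by
  funext x
  simp [reco_apply, h]

theorem marg_reco (p : Fin (n+1) → Prop) [DecidablePred p] (β : Fin n) (ω : (∀ i, X i) → ℝ) :
    marg p (reco β ω) = fun x => (mass ω)⁻¹ *
      (marg (fun i => p i ∧ (i : ℕ) ≤ β) ω x * marg (fun i => p i ∧ (β : ℕ) < i) ω x) := by
  funext x
  have hglue : ∀ z w, (∀ i, p i → glue β z w i = x i) ↔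
      (∀ i, p i ∧ (i : ℕ) ≤ β → z i = x i) ∧ (∀ i, p i ∧ (β : ℕ) < i → w i = x i) := by
    intro z w
    constructor
    · intro h
      exact ⟨fun i hi => by simpa [glue, hi.2] using h i hi.1,
        fun i hi => by simpa [glue, show ¬ (i : ℕ) ≤ β by omega] using h i hi.1⟩
    · rintro ⟨hz, hw⟩ i hi
      by_cases h : (i : ℕ) ≤ β
      · simp [glue, h, hz i ⟨hi, h⟩]
      · simp [glue, h, hw i ⟨hi, by omega⟩]
  have hsum := sum_mul_margLe_mul_margGt (fun y => if ∀ i, p i → y i = x i then 1 else 0) β ω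
  simp only [boole_mul, hglue, ← ite_zero_mul_ite_zero, ← sum_mul_sum] at hsum
  simp only [marg, reco_apply]
  rw [← hsum, mul_sum]
  simp only [mul_ite, mul_zero]

theorem margLe_reco (α β : Fin n) (ω : (∀ i, X i) → ℝ) :
    margLe α (reco β ω) = fun x => (mass ω)⁻¹ *
      (marg (fun i => (i : ℕ) ≤ α ∧ (i : ℕ) ≤ β) ω x *
        marg (fun i => (i : ℕ) ≤ α ∧ (β : ℕ) < i) ω x) :=
  marg_reco _ β ω

theorem margGt_reco (α β : Fin n) (ω : (∀ i, X i) → ℝ) :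
    margGt α (reco β ω) = fun x => (mass ω)⁻¹ *
      (marg (fun i => (α : ℕ) < i ∧ (i : ℕ) ≤ β) ω x *
        marg (fun i => (α : ℕ) < i ∧ (β : ℕ) < i) ω x) :=
  marg_reco _ β ω

theorem margLe_reco_of_le {α β : Fin n} (h : α ≤ β) {ω : (∀ i, X i) → ℝ} (hm : mass ω ≠ 0) :
    margLe α (reco β ω) = margLe α ω := by
  have hle : marg (fun i => (i : ℕ) ≤ α ∧ (i : ℕ) ≤ β) ω = margLe α ω :=
    marg_congr (fun i => by omega) ω
  have hnone : marg (fun i => (i : ℕ) ≤ α ∧ (β : ℕ) < i) ω = fun _ => mass ω :=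
    (marg_congr (fun i => iff_false_intro (by omega)) ω).trans (marg_false ω)
  funext x
  rw [margLe_reco, hle, hnone]
  field_simp

theorem margGt_reco_of_le {α β : Fin n} (h : β ≤ α) {ω : (∀ i, X i) → ℝ} (hm : mass ω ≠ 0) :
    margGt α (reco β ω) = margGt α ω := by
  have hnone : marg (fun i => (α : ℕ) < i ∧ (i : ℕ) ≤ β) ω = fun _ => mass ω :=
    (marg_congr (fun i => iff_false_intro (by omega)) ω).trans (marg_false ω)
  have hgt : marg (fun i => (α : ℕ) < i ∧ (β : ℕ) < i) ω = margGt α ω :=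
    marg_congr (fun i => by omega) ω
  funext x
  rw [margGt_reco, hnone, hgt]
  field_simp

theorem reco_comm (α β : Fin n) (ω : (∀ i, X i) → ℝ) : reco α (reco β ω) = reco β (reco α ω) := by
  funext x
  simp only [reco_apply, mass_reco, margLe_reco, margGt_reco, and_comm]
  ring

theorem reco_reco_self (α : Fin n) (ω : (∀ i, X i) → ℝ) : reco α (reco α ω) = reco α ω := by
  by_cases hm : mass ω = 0
  · rw [reco_of_mass_eq_zero ((mass_reco α ω).trans hm), reco_of_mass_eq_zero hm]
  · funext x
    rw [reco_apply, reco_apply, mass_reco, margLe_reco_of_le le_rfl hm, margGt_reco_of_le le_rfl hm]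

theorem recoSet_empty (ω : (∀ i, X i) → ℝ) : recoSet ∅ ω = ω := by
  simp [recoSet]

theorem recoSet_insert_of_notMem {α : Fin n} {G : Finset (Fin n)} (h : α ∉ G)
    (ω : (∀ i, X i) → ℝ) : recoSet (insert α G) ω = reco α (recoSet G ω) := by
  have hperm : ((insert α G).sort (· ≤ ·)).Perm (α :: G.sort (· ≤ ·)) :=
    (List.perm_ext_iff_of_nodup (sort_nodup _ _)
      (List.nodup_cons.mpr ⟨by simpa using h, sort_nodup _ _⟩)).mpr (by simp)
  rw [recoSet, hperm.foldr_eq' (fun x _ y _ z => reco_comm y x z) ω, List.foldr_cons, recoSet]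

theorem recoSet_insert (α : Fin n) (G : Finset (Fin n)) (ω : (∀ i, X i) → ℝ) :
    recoSet (insert α G) ω = reco α (recoSet G ω) := by
  by_cases h : α ∈ G
  · rw [insert_eq_of_mem h, ← insert_erase h, recoSet_insert_of_notMem (notMem_erase α G),
      reco_reco_self]
  · exact recoSet_insert_of_notMem h ω

theorem recoSet_union (A B : Finset (Fin n)) (ω : (∀ i, X i) → ℝ) :
    recoSet (A ∪ B) ω = recoSet A (recoSet B ω) := by
  induction A using Finset.induction_on with
  | empty => rw [empty_union, recoSet_empty]
  | insert α A _ ih => rw [insert_union, recoSet_insert, ih, recoSet_insert]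

theorem mass_recoSet (G : Finset (Fin n)) (ω : (∀ i, X i) → ℝ) : mass (recoSet G ω) = mass ω := by
  induction G using Finset.induction_on with
  | empty => rw [recoSet_empty]
  | insert α G _ ih => rw [recoSet_insert, mass_reco, ih]

theorem margLe_recoSet_of_forall_le {α : Fin n} {B : Finset (Fin n)} (hB : ∀ β ∈ B, α ≤ β)
    {ω : (∀ i, X i) → ℝ} (hm : mass ω ≠ 0) : margLe α (recoSet B ω) = margLe α ω := by
  induction B using Finset.induction_on with
  | empty => rw [recoSet_empty]
  | insert β B _ ih =>
    rw [recoSet_insert, margLe_reco_of_le (hB β (mem_insert_self β B)) (by rwa [mass_recoSet]),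
      ih fun γ hγ => hB γ (mem_insert_of_mem hγ)]

theorem margGt_recoSet_of_forall_le {α : Fin n} {A : Finset (Fin n)} (hA : ∀ β ∈ A, β ≤ α)
    {ω : (∀ i, X i) → ℝ} (hm : mass ω ≠ 0) : margGt α (recoSet A ω) = margGt α ω := by
  induction A using Finset.induction_on with
  | empty => rw [recoSet_empty]
  | insert β A _ ih =>
    rw [recoSet_insert, margGt_reco_of_le (hA β (mem_insert_self β A)) (by rwa [mass_recoSet]),
      ih fun γ hγ => hA γ (mem_insert_of_mem hγ)]

theorem margLe_recoSet_eq_filter (α : Fin n) (S : Finset (Fin n)) {ω : (∀ i, X i) → ℝ}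
    (hm : mass ω ≠ 0) : margLe α (recoSet S ω) = margLe α (recoSet (S.filter (· ≤ α)) ω) := by
  conv_lhs => rw [← filter_union_filter_not_eq (· ≤ α) S, union_comm, recoSet_union]
  exact margLe_recoSet_of_forall_le (fun β hβ => (not_le.mp (mem_filter.mp hβ).2).le)
    (by rwa [mass_recoSet])

theorem margGt_recoSet_eq_filter (α : Fin n) (S : Finset (Fin n)) {ω : (∀ i, X i) → ℝ}
    (hm : mass ω ≠ 0) :
    margGt α (recoSet S ω) = margGt α (recoSet (S.filter (fun β => ¬ β ≤ α)) ω) := by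
  conv_lhs => rw [← filter_union_filter_not_eq (· ≤ α) S, recoSet_union]
  exact margGt_recoSet_of_forall_le (fun β hβ => (mem_filter.mp hβ).2) (by rwa [mass_recoSet])

theorem reco_sum_of_factorization (α : Fin n) {L₁ L₂ : Finset (Fin n)} (hd : Disjoint L₁ L₂)
    {c c₁ c₂ : Finset (Fin n) → ℝ} (hc : ∀ G, c G = c₁ (G ∩ L₁) * c₂ (G ∩ L₂))
    (hc₁ : ∑ G ∈ L₁.powerset, c₁ G = 1) (hc₂ : ∑ G ∈ L₂.powerset, c₂ G = 1)
    {u : Finset (Fin n) → (∀ i, X i) → ℝ} {m : ℝ} (hmass : ∀ G, mass (u G) = m)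
    (hle : ∀ G, margLe α (u G) = margLe α (u (G ∩ L₁)))
    (hgt : ∀ G, margGt α (u G) = margGt α (u (G ∩ L₂))) :
    reco α (fun x => ∑ G ∈ (L₁ ∪ L₂).powerset, c G * u G x) =
      fun x => ∑ G ∈ (L₁ ∪ L₂).powerset, c G * reco α (u G) x := by
  have hmass_sum : mass (fun x => ∑ G ∈ (L₁ ∪ L₂).powerset, c G * u G x) = m :=
    calc _ = ∑ G ∈ (L₁ ∪ L₂).powerset, c G * mass (u G) := mass_sum_mul _ c u
      _ = (∑ G ∈ (L₁ ∪ L₂).powerset, c₁ (G ∩ L₁) * c₂ (G ∩ L₂)) * m := by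
          simp only [hc, hmass, sum_mul]
      _ = m := by rw [sum_powerset_union_mul hd, hc₁, hc₂, one_mul, one_mul]
  have hle_sum : ∀ x, margLe α (fun x => ∑ G ∈ (L₁ ∪ L₂).powerset, c G * u G x) x =
      ∑ G ∈ L₁.powerset, c₁ G * margLe α (u G) x := fun x =>
    calc _ = ∑ G ∈ (L₁ ∪ L₂).powerset, c G * margLe α (u G) x := congrFun (margLe_sum_mul α _ c u) x
      _ = ∑ G ∈ (L₁ ∪ L₂).powerset, c₁ (G ∩ L₁) * margLe α (u (G ∩ L₁)) x * c₂ (G ∩ L₂) :=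
          sum_congr rfl fun G _ => by rw [hc, hle G]; ring
      _ = _ := (sum_powerset_union_mul hd (fun G => c₁ G * margLe α (u G) x) c₂).trans
          (by rw [hc₂, mul_one])
  have hgt_sum : ∀ x, margGt α (fun x => ∑ G ∈ (L₁ ∪ L₂).powerset, c G * u G x) x =
      ∑ G ∈ L₂.powerset, c₂ G * margGt α (u G) x := fun x =>
    calc _ = ∑ G ∈ (L₁ ∪ L₂).powerset, c G * margGt α (u G) x := congrFun (margGt_sum_mul α _ c u) x
      _ = ∑ G ∈ (L₁ ∪ L₂).powerset, c₁ (G ∩ L₁) * (c₂ (G ∩ L₂) * margGt α (u (G ∩ L₂)) x) :=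
          sum_congr rfl fun G _ => by rw [hc, hgt G]; ring
      _ = _ := (sum_powerset_union_mul hd c₁ (fun G => c₂ G * margGt α (u G) x)).trans
          (by rw [hc₁, one_mul])
  funext x
  rw [reco_apply, hmass_sum, hle_sum, hgt_sum, ← sum_powerset_union_mul hd, mul_sum]
  refine sum_congr rfl fun G _ => ?_
  rw [reco_apply, hmass, hc, hle G, hgt G]
  ring

theorem reco_sum_recoSet_union (c : Finset (Fin n) → Finset (Fin n) → ℝ)
    (hfact : ∀ L₁ L₂ : Finset (Fin n), Disjoint L₁ L₂ → L₁ ∪ L₂ = univ →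
      ∀ G, c univ G = c L₁ (G ∩ L₁) * c L₂ (G ∩ L₂))
    (hnorm : ∀ L, ∑ G ∈ L.powerset, c L G = 1)
    (α : Fin n) (K : Finset (Fin n)) (v : (∀ i, X i) → ℝ) :
    reco α (fun x => ∑ G ∈ univ.powerset, c univ G * recoSet (G ∪ K) v x) =
      fun x => ∑ G ∈ univ.powerset, c univ G * reco α (recoSet (G ∪ K) v) x := by
  by_cases hm : mass v = 0
  · have hsum : mass (fun x => ∑ G ∈ univ.powerset, c univ G * recoSet (G ∪ K) v x) = 0 := by
      simp [mass_sum_mul, mass_recoSet, hm]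
    rw [reco_of_mass_eq_zero hsum]
    funext x
    simp [reco_of_mass_eq_zero ((mass_recoSet _ v).trans hm)]
  set L₁ := univ.filter (· ≤ α)
  set L₂ := univ.filter (fun β => ¬ β ≤ α)
  have hd : Disjoint L₁ L₂ := disjoint_filter_filter_not _ _ _
  have hu : L₁ ∪ L₂ = univ := filter_union_filter_not_eq _ _
  have hle : ∀ G, margLe α (recoSet (G ∪ K) v) = margLe α (recoSet (G ∩ L₁ ∪ K) v) := by
    intro G
    rw [margLe_recoSet_eq_filter α _ hm, margLe_recoSet_eq_filter α (G ∩ L₁ ∪ K) hm]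
    congr 2
    ext β
    simp only [L₁, mem_filter, mem_union, mem_inter, mem_univ, true_and]
    tauto
  have hgt : ∀ G, margGt α (recoSet (G ∪ K) v) = margGt α (recoSet (G ∩ L₂ ∪ K) v) := by
    intro G
    rw [margGt_recoSet_eq_filter α _ hm, margGt_recoSet_eq_filter α (G ∩ L₂ ∪ K) hm]
    congr 2
    ext β
    simp only [L₂, mem_filter, mem_union, mem_inter, mem_univ, true_and]
    tauto
  have h := reco_sum_of_factorization α hd (hfact L₁ L₂ hd hu) (hnorm L₁) (hnorm L₂)
    (fun G => mass_recoSet (G ∪ K) v) hle hgt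
  rwa [hu] at h

end

theorem reco_linearity_general {X : Fin (n+1) → Type*} [∀ i, Fintype (X i)]
    [∀ i, DecidableEq (X i)]
    (c : Finset (Fin n) → Finset (Fin n) → ℝ → ℝ)
    (hfact : ∀ L₁ L₂ : Finset (Fin n), Disjoint L₁ L₂ → L₁ ∪ L₂ = Finset.univ →
      ∀ (G : Finset (Fin n)) (t : ℝ), 0 ≤ t →
        c Finset.univ G t = c L₁ (G ∩ L₁) t * c L₂ (G ∩ L₂) t)
    (hnorm : ∀ (L : Finset (Fin n)) (t : ℝ), 0 ≤ t → ∑ H ∈ L.powerset, c L H t = 1)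
    (v : (∀ i, X i) → ℝ)
    (H : Finset (Fin n)) (t : ℝ) (ht : 0 ≤ t) :
    recoSet H (fun x => ∑ G ∈ (Finset.univ : Finset (Fin n)).powerset,
        c Finset.univ G t * recoSet G v x)
      = fun x => ∑ G ∈ (Finset.univ : Finset (Fin n)).powerset,
        c Finset.univ G t * recoSet (G ∪ H) v x := by
  induction H using Finset.induction_on with
  | empty => simp only [recoSet_empty, union_empty]
  | insert α H _ ih =>
    rw [recoSet_insert, ih, reco_sum_recoSet_union (c · · t)
      (fun L₁ L₂ hd hu G => hfact L₁ L₂ hd hu G t ht) (fun L => hnorm L t ht)]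
    simp only [union_insert, recoSet_insert]

theorem reco_linearity {X : Fin (n+1) → Type*} [∀ i, Fintype (X i)]
    [∀ i, DecidableEq (X i)] [∀ i, Nonempty (X i)]
    (c : Finset (Fin n) → Finset (Fin n) → ℝ → ℝ)
    (hnonneg : ∀ (L : Finset (Fin n)) (G : Finset (Fin n)) (t : ℝ), 0 ≤ t → G ⊆ L → 0 ≤ c L G t)
    (hfact : ∀ L₁ L₂ : Finset (Fin n), Disjoint L₁ L₂ → L₁ ∪ L₂ = Finset.univ →
      ∀ (G : Finset (Fin n)) (t : ℝ), 0 ≤ t →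
        c Finset.univ G t = c L₁ (G ∩ L₁) t * c L₂ (G ∩ L₂) t)
    (hnorm : ∀ (L : Finset (Fin n)) (t : ℝ), 0 ≤ t → ∑ H ∈ L.powerset, c L H t = 1)
    (v : (∀ i, X i) → ℝ) (hv : ∀ x, 0 ≤ v x)
    (H : Finset (Fin n)) (t : ℝ) (ht : 0 ≤ t) :
    recoSet H (fun x => ∑ G ∈ (Finset.univ : Finset (Fin n)).powerset,
        c Finset.univ G t * recoSet G v x)
      = fun x => ∑ G ∈ (Finset.univ : Finset (Fin n)).powerset,
        c Finset.univ G t * recoSet (G ∪ H) v x :=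
  reco_linearity_general c hfact hnorm v H t ht
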